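/- Let Q = ℝ^m ⊗ Sym²(ℝ^{m*}) and let T^r_m Q be the space of r-jets at 0 of maps ℝ^m → Q, with jet coordinates Λ^λ_{μ₁μ₂}, Λ^λ_{μ₁μ₂,μ₃}, …, Λ^λ_{μ₁μ₂,μ₃…μ_{r+2}} (symmetric in μ₁,μ₂ and in the derivative indices). Let the additive group B = Sym^{r+2}(ℝ^{m*}) ⊗ ℝ^m act by fixing all coordinates of order < r and translating the top coordinate: Λ^λ_{μ₁μ₂,μ₃…μ_{r+2}} ↦ Λ^λ_{μ₁μ₂,μ₃…μ_{r+2}} − a^λ_{μ₁…μ_{r+2}}. Then this action is free, and its orbits are exactly the fibers of the map forgetting the top symmetrized part while retaining the formal curvature-type combinations Λ^λ_{μ₁μ₂,μ₃…μ_{r+2}} − Λ^λ_{μ₁μ₃,μ₂μ₄…μ_{r+2}}. -/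
import Mathlib


/-- The translation action of the kernel `B = Sym^{r+2}(ℝ^{m*}) ⊗ ℝ^m` on the
top-order jet coordinates `Λ^λ_{μ₁μ₂,μ₃…μ_{r+2}}` of formal classical
connections (symmetric in `μ₁,μ₂` and in `μ₃,…,μ_{r+2}`) is free, and its
orbits are exactly the fibers of the map retaining the formal curvature-type
combinations `Λ^λ_{μ₁μ₂,μ₃…μ_{r+2}} − Λ^λ_{μ₁μ₃,μ₂μ₄…μ_{r+2}}`. -/
theorem stmt14 {m r : ℕ}
    (IsJet : (Fin m → (Fin (r + 2) → Fin m) → ℝ) → Prop)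
    (hIsJet : ∀ x, IsJet x ↔
      ((∀ (lam : Fin m) (μ : Fin (r + 2) → Fin m),
          x lam (μ ∘ (Equiv.swap (0 : Fin (r + 2)) 1)) = x lam μ) ∧
       (∀ (lam : Fin m) (μ : Fin (r + 2) → Fin m) (σ : Equiv.Perm (Fin (r + 2))),
          σ 0 = 0 → σ 1 = 1 → x lam (μ ∘ σ) = x lam μ)))
    (IsSym : (Fin m → (Fin (r + 2) → Fin m) → ℝ) → Prop)
    (hIsSym : ∀ a, IsSym a ↔
      ∀ (lam : Fin m) (μ : Fin (r + 2) → Fin m) (σ : Equiv.Perm (Fin (r + 2))),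
        a lam (μ ∘ σ) = a lam μ) :
    -- the action (a, x) ↦ x − a is free
    (∀ a x : Fin m → (Fin (r + 2) → Fin m) → ℝ, IsSym a → (∀ lam μ, x lam μ - a lam μ = x lam μ) →
      ∀ lam μ, a lam μ = 0) ∧
    -- orbits = fibers of the formal curvature-type combinations
    (∀ x y : Fin m → (Fin (r + 2) → Fin m) → ℝ, IsJet x → IsJet y →
      ((∃ a, IsSym a ∧ ∀ lam μ, y lam μ = x lam μ - a lam μ) ↔
        (∀ (lam : Fin m) (μ : Fin (r + 2) → Fin m),
          x lam μ - x lam (μ ∘ (Equiv.swap (1 : Fin (r + 2)) 2)) =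
          y lam μ - y lam (μ ∘ (Equiv.swap (1 : Fin (r + 2)) 2))))) := by
  constructor
  · intro a x _ h lam μ
    have := h lam μ; linarith
  · intro x y hx hy
    rw [hIsJet] at hx hy
    constructor
    · rintro ⟨a, ha, hxy⟩
      rw [hIsSym] at ha
      intro lam μ
      have h1 := hxy lam μ
      have h2 := hxy lam (μ ∘ (Equiv.swap (1 : Fin (r + 2)) 2))
      have h3 := ha lam μ (Equiv.swap (1 : Fin (r + 2)) 2)
      rw [h1, h2, h3]; ring
    · intro hcurv
      set a : Fin m → (Fin (r + 2) → Fin m) → ℝ :=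
        fun lam μ => x lam μ - y lam μ with hadef
      have h01 : ∀ lam μ, a lam (μ ∘ (Equiv.swap (0 : Fin (r + 2)) 1)) = a lam μ := by
        intro lam μ; simp only [hadef]; rw [hx.1, hy.1]
      have hfix : ∀ lam μ (σ : Equiv.Perm (Fin (r + 2))), σ 0 = 0 → σ 1 = 1 →
          a lam (μ ∘ σ) = a lam μ := by
        intro lam μ σ e0 e1; simp only [hadef]
        rw [hx.2 lam μ σ e0 e1, hy.2 lam μ σ e0 e1]
      have h12 : ∀ lam μ, a lam (μ ∘ (Equiv.swap (1 : Fin (r + 2)) 2)) = a lam μ := by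
        intro lam μ
        have := hcurv lam μ
        simp only [hadef]; linarith
      let H : Subgroup (Equiv.Perm (Fin (r + 2))) :=
      { carrier := {σ | ∀ lam μ, a lam (μ ∘ σ) = a lam μ}
        one_mem' := by
          intro lam μ
          simp
        mul_mem' := by
          intro σ τ hσ hτ lam μ
          have hcomp : μ ∘ ⇑(σ * τ) = (μ ∘ ⇑σ) ∘ ⇑τ := by
            ext k; simp [Equiv.Perm.mul_apply]
          rw [hcomp, hτ, hσ]
        inv_mem' := by
          intro σ hσ lam μ
          have h' := hσ lam (μ ∘ ⇑σ⁻¹)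
          have hcomp : (μ ∘ ⇑σ⁻¹) ∘ ⇑σ = μ := by
            ext k; simp
          rw [hcomp] at h'
          exact h'.symm }
      have mem01 : Equiv.swap (0 : Fin (r + 2)) 1 ∈ H := fun lam μ => h01 lam μ
      have mem12 : Equiv.swap (1 : Fin (r + 2)) 2 ∈ H := fun lam μ => h12 lam μ
      have hne0 : ∀ i : Fin (r + 2), 2 ≤ i.val → (0 : Fin (r + 2)) ≠ i := by
        intro i hi h; rw [← h] at hi; simp at hi
      have hne1 : ∀ i : Fin (r + 2), 2 ≤ i.val → (1 : Fin (r + 2)) ≠ i := by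
        intro i hi h; rw [← h] at hi
        have : ((1 : Fin (r + 2))).val = 1 := rfl
        omega
      have hswap2 : ∀ i j : Fin (r + 2), 2 ≤ i.val → 2 ≤ j.val → Equiv.swap i j ∈ H := by
        intro i j hi hj
        exact fun lam μ => hfix lam μ _
          (Equiv.swap_apply_of_ne_of_ne (hne0 i hi) (hne0 j hj))
          (Equiv.swap_apply_of_ne_of_ne (hne1 i hi) (hne1 j hj))
      have hswap1 : ∀ j : Fin (r + 2), 2 ≤ j.val → Equiv.swap (1 : Fin (r + 2)) j ∈ H := by
        intro j hj
        have hval2 : ((2 : Fin (r + 2))).val = 2 := by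
          have h2lt : 2 < r + 2 := lt_of_le_of_lt hj j.isLt
          exact_mod_cast Fin.val_cast_of_lt (n := r + 2) (a := 2) h2lt
        have e1 : (Equiv.swap (2 : Fin (r + 2)) j) 1 = 1 :=
          Equiv.swap_apply_of_ne_of_ne (hne1 2 (le_of_eq hval2.symm)) (hne1 j hj)
        have e2 : (Equiv.swap (2 : Fin (r + 2)) j) 2 = j := Equiv.swap_apply_left _ _
        have heq : Equiv.swap (1 : Fin (r + 2)) j =
            Equiv.swap (2 : Fin (r + 2)) j * Equiv.swap (1 : Fin (r + 2)) 2 *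
              (Equiv.swap (2 : Fin (r + 2)) j)⁻¹ := by
          rw [← Equiv.swap_apply_apply, e1, e2]
        rw [heq]
        have hs := hswap2 2 j (le_of_eq hval2.symm) hj
        exact H.mul_mem (H.mul_mem hs mem12) (H.inv_mem hs)
      have hswap0 : ∀ j : Fin (r + 2), 2 ≤ j.val → Equiv.swap (0 : Fin (r + 2)) j ∈ H := by
        intro j hj
        have e0 : (Equiv.swap (1 : Fin (r + 2)) j) 0 = 0 :=
          Equiv.swap_apply_of_ne_of_ne (by simp [Fin.ext_iff]) (hne0 j hj)
        have e1 : (Equiv.swap (1 : Fin (r + 2)) j) 1 = j := Equiv.swap_apply_left _ _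
        have heq : Equiv.swap (0 : Fin (r + 2)) j =
            Equiv.swap (1 : Fin (r + 2)) j * Equiv.swap (0 : Fin (r + 2)) 1 *
              (Equiv.swap (1 : Fin (r + 2)) j)⁻¹ := by
          rw [← Equiv.swap_apply_apply, e0, e1]
        rw [heq]
        have hs := hswap1 j hj
        exact H.mul_mem (H.mul_mem hs mem01) (H.inv_mem hs)
      have key : ∀ i j : Fin (r + 2), Equiv.swap i j ∈ H := by
        have main : ∀ i j : Fin (r + 2), i.val < j.val → Equiv.swap i j ∈ H := by
          intro i j hij
          rcases Nat.lt_or_ge j.val 2 with hj | hj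
          · have hi0 : i = 0 := Fin.ext (by simp only [Fin.val_zero]; omega)
            have hj1 : j = 1 := Fin.ext (by simp only [Fin.val_one]; omega)
            rw [hi0, hj1]; exact mem01
          · rcases Nat.lt_or_ge i.val 2 with hi | hi
            · rcases Nat.lt_or_ge i.val 1 with hi0 | hi1
              · have : i = 0 := Fin.ext (by simp only [Fin.val_zero]; omega)
                rw [this]; exact hswap0 j hj
              · have : i = 1 := Fin.ext (by simp only [Fin.val_one]; omega)
                rw [this]; exact hswap1 j hj
            · exact hswap2 i j hi hj
        intro i j
        rcases lt_trichotomy i.val j.val with h | h | h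
        · exact main i j h
        · have : i = j := Fin.ext h
          rw [this, Equiv.swap_self]
          exact H.one_mem
        · rw [Equiv.swap_comm]; exact main j i h
      have hall : ∀ σ : Equiv.Perm (Fin (r + 2)), σ ∈ H := by
        intro σ
        have hcl : σ ∈ Subgroup.closure {τ : Equiv.Perm (Fin (r + 2)) | τ.IsSwap} := by
          rw [Equiv.Perm.closure_isSwap]; trivial
        refine (Subgroup.closure_le H).mpr ?_ hcl
        rintro τ ⟨i, j, -, rfl⟩
        exact key i j
      refine ⟨a, ?_, ?_⟩
      · rw [hIsSym]
        intro lam μ σ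
        exact hall σ lam μ
      · intro lam μ
        simp only [hadef]; ring
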